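/- Let k be a field of characteristic 2 and consider the 5×5 matrix H over k with rows (a₂, 0, a₁, a₇, a₆), (0, a₄, a₅, a₁₁, a₁₀), (a₄, a₂, a₃, a₉, a₈), (1, 0, 0, 0, 1), (0, 1, 0, b₁, 0). If rank(H) ≤ 2, then a₁ = a₃ = a₅ = a₇ = a₁₀ = 0, a₄ = a₈, a₂ = a₆, b₁·a₄ = a₁₁, and b₁·a₂ = a₉. -/

import Mathlib

/-!
Rows 3 and 4 of `H`, restricted to columns 0 and 1, form an identity block. The 3×3 minor of a
matrix `A` on rows `i, p, q` and columns `u, v, j`, where rows `p, q` and columns `u, v` meet in an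
identity block, is the Schur complement entry `A i j - A i u * A p j - A i v * A q j`. Since
`rank H ≤ 2`, all these minors vanish, and for `i ∈ {0, 1, 2}`, `j ∈ {2, 3, 4}` the nine resulting
equations are exactly the nine claimed identities.
-/

theorem Matrix.det_submatrix_eq_zero_of_rank_lt {R ι m n : Type*} [CommRing R] [IsDomain R]
    [Fintype ι] [DecidableEq ι] [Fintype n] (A : Matrix m n R) (r : ι → m) (c : ι → n)
    (h : A.rank < Fintype.card ι) : (A.submatrix r c).det = 0 := by
  by_contra hdet
  have hsub : (A.submatrix r c).rank = Fintype.card ι := rank_of_det_ne_zero hdet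
  exact (hsub ▸ A.rank_submatrix_le r c).not_gt h

theorem Matrix.apply_eq_of_rank_le_two_of_identity_block {R m n : Type*} [CommRing R] [IsDomain R]
    [Fintype n] (A : Matrix m n R) (hA : A.rank ≤ 2) {p q : m} {u v : n}
    (hpu : A p u = 1) (hpv : A p v = 0) (hqu : A q u = 0) (hqv : A q v = 1) (i : m) (j : n) :
    A i j = A i u * A p j + A i v * A q j := by
  have hminor := A.det_submatrix_eq_zero_of_rank_lt ![i, p, q] ![u, v, j]
    (by rw [Fintype.card_fin]; omega)
  rw [det_fin_three] at hminor
  simp only [submatrix_apply, Matrix.cons_val, hpu, hpv, hqu, hqv] at hminor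
  linear_combination hminor

theorem stmt_11_general {k : Type*} [Field k]
    (a₁ a₂ a₃ a₄ a₅ a₆ a₇ a₈ a₉ a₁₀ a₁₁ b₁ : k)
    (H : Matrix (Fin 5) (Fin 5) k)
    (hH : H = !![a₂, 0, a₁, a₇, a₆;
                 0, a₄, a₅, a₁₁, a₁₀;
                 a₄, a₂, a₃, a₉, a₈;
                 1, 0, 0, 0, 1;
                 0, 1, 0, b₁, 0])
    (hrank : H.rank ≤ 2) :
    a₁ = 0 ∧ a₃ = 0 ∧ a₅ = 0 ∧ a₇ = 0 ∧ a₁₀ = 0 ∧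
      a₄ = a₈ ∧ a₂ = a₆ ∧ b₁ * a₄ = a₁₁ ∧ b₁ * a₂ = a₉ := by
  have schur := H.apply_eq_of_rank_le_two_of_identity_block hrank (p := 3) (q := 4) (u := 0)
    (v := 1) (by simp [hH]) (by simp [hH]) (by simp [hH]) (by simp [hH])
  have h02 := schur 0 2; have h03 := schur 0 3; have h04 := schur 0 4
  have h12 := schur 1 2; have h13 := schur 1 3; have h14 := schur 1 4
  have h22 := schur 2 2; have h23 := schur 2 3; have h24 := schur 2 4
  simp only [hH, Matrix.of_apply, Matrix.cons_val, mul_zero, mul_one, zero_mul,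
    add_zero, zero_add] at h02 h03 h04 h12 h13 h14 h22 h23 h24
  exact ⟨h02, h22, h12, h03, h14, h24.symm, h04.symm, by rw [h13, mul_comm], by rw [h23, mul_comm]⟩

/-- Over a field k of characteristic 2, for the explicit 5×5 matrix H below,
rank(H) ≤ 2 implies a₁ = a₃ = a₅ = a₇ = a₁₀ = 0, a₄ = a₈, a₂ = a₆, b₁a₄ = a₁₁, b₁a₂ = a₉. -/
theorem stmt_11 {k : Type*} [Field k] [CharP k 2]
    (a₁ a₂ a₃ a₄ a₅ a₆ a₇ a₈ a₉ a₁₀ a₁₁ b₁ : k)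
    (H : Matrix (Fin 5) (Fin 5) k)
    (hH : H = !![a₂, 0, a₁, a₇, a₆;
                 0, a₄, a₅, a₁₁, a₁₀;
                 a₄, a₂, a₃, a₉, a₈;
                 1, 0, 0, 0, 1;
                 0, 1, 0, b₁, 0])
    (hrank : H.rank ≤ 2) :
    a₁ = 0 ∧ a₃ = 0 ∧ a₅ = 0 ∧ a₇ = 0 ∧ a₁₀ = 0 ∧
      a₄ = a₈ ∧ a₂ = a₆ ∧ b₁ * a₄ = a₁₁ ∧ b₁ * a₂ = a₉ :=
  stmt_11_general a₁ a₂ a₃ a₄ a₅ a₆ a₇ a₈ a₉ a₁₀ a₁₁ b₁ H hH hrank
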